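/- arXiv:2010.09265 — 3 statements merged into one kernel-verified Lean document; each statement's English description precedes it below -/
import Mathlib

section
/- Under the model y = Σ_{i=1}^k z_i f_i(⟨β_i*, x⟩) + ε with x ~ N(0, Σ), Σ positive definite, z_i i.i.d. mean-zero unit-variance independent of x, ε mean zero independent of everything, and assuming E[f_j'(⟨x, β_j*⟩)] ≠ 0, each parameter satisfies β_j* = c_j Σ^{-1} E[z_j y x] where c_j = 1 / E[f_j'(⟨x, β_j*⟩)]. -/
/-!
Stein's lemma `E[f(t) t] = E[f'(t)]` for `t ~ N(0, 1)`, applied to one coordinate of a standard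
Gaussian vector `v` with the others frozen (Fubini), gives `E[f(⟨a, v⟩) v] = E[f'(⟨a, v⟩)] a`.
Pushing forward by `A` turns this into `E[f(⟨β, x⟩) x] = E[f'(⟨β, x⟩)] (A Aᵀ) β` for `x = A v`.
In the model, `E[z_i z_j] = δ_ij` and the independence of `ε` remove every term of `E[z_j y x]`
except `E[f_j(⟨β_j, x⟩) x]`, and it remains to invert `S = A Aᵀ`.
-/

open MeasureTheory ProbabilityTheory Matrix Real
open scoped NNReal ENNReal

lemma LipschitzWith.memLp_comp {α E F : Type*} [MeasurableSpace α] {μ : Measure α}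
    [IsFiniteMeasure μ] [NormedAddCommGroup E] [NormedAddCommGroup F] {K : ℝ≥0} {f : E → F}
    (hf : LipschitzWith K f) {g : α → E} {p : ℝ≥0∞} (hg : MemLp g p μ) :
    MemLp (fun a => f (g a)) p μ := by
  have hf₀ : LipschitzWith (K + 0) (fun e => f e - f 0) := hf.sub (LipschitzWith.const _)
  convert (hf₀.comp_memLp (sub_self _) hg).add (memLp_const (f 0)) using 1
  ext; simp

lemma hasDerivAt_gaussianPDFReal (μ : ℝ) (v : ℝ≥0) (t : ℝ) :
    HasDerivAt (gaussianPDFReal μ v) (-(t - μ) / v * gaussianPDFReal μ v t) t := by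
  have h := ((((hasDerivAt_id' t).sub_const μ).fun_pow 2).fun_neg.div_const
    (2 * (v : ℝ))).exp.const_mul (√(2 * π * v))⁻¹
  rw [gaussianPDFReal_def]
  exact h.congr_deriv (by push_cast; ring)

lemma integrable_gaussianReal_iff {E : Type*} [NormedAddCommGroup E] [NormedSpace ℝ E]
    {μ : ℝ} {v : ℝ≥0} (hv : v ≠ 0) {g : ℝ → E} :
    Integrable g (gaussianReal μ v) ↔ Integrable (fun t => gaussianPDFReal μ v t • g t) := by
  rw [gaussianReal_of_var_ne_zero _ hv, integrable_withDensity_iff_integrable_smul'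
    (measurable_gaussianPDF μ v) (ae_of_all _ fun _ => gaussianPDF_lt_top)]
  simp only [toReal_gaussianPDF]

section GaussianPi

variable {ι : Type*} [Fintype ι]

lemma memLp_eval_gaussianPi (i : ι) :
    MemLp (fun v => v i) 2 (Measure.pi fun _ : ι => gaussianReal 0 1) :=
  (memLp_id_gaussianReal' 2 ENNReal.ofNat_ne_top).comp_measurePreserving
    (measurePreserving_eval _ i)

lemma memLp_dotProduct_gaussianPi (a : ι → ℝ) :
    MemLp (fun v => a ⬝ᵥ v) 2 (Measure.pi fun _ : ι => gaussianReal 0 1) :=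
  memLp_finsetSum _ fun i _ => (memLp_eval_gaussianPi i).const_mul (a i)

lemma integrable_comp_dotProduct_smul_gaussianPi {f : ℝ → ℝ} {K : ℝ≥0}
    (hf : LipschitzWith K f) (a : ι → ℝ) :
    Integrable (fun v => f (a ⬝ᵥ v) • v) (Measure.pi fun _ : ι => gaussianReal 0 1) :=
  Integrable.of_eval fun i =>
    (hf.memLp_comp (memLp_dotProduct_gaussianPi a)).integrable_mul (memLp_eval_gaussianPi i)

end GaussianPi

section Stein

variable {f f' : ℝ → ℝ} {L : ℝ}

lemma measurable_of_hasDerivAt (hf : ∀ t, HasDerivAt f (f' t) t) : Measurable f' := by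
  rw [show f' = deriv f from funext fun t => (hf t).deriv.symm]
  exact measurable_deriv f

lemma lipschitzWith_of_abs_deriv_le (hf : ∀ t, HasDerivAt f (f' t) t) (hf' : ∀ t, |f' t| ≤ L) :
    LipschitzWith L.toNNReal f := by
  refine lipschitzWith_of_nnnorm_deriv_le (fun t => (hf t).differentiableAt) fun t => ?_
  rw [← NNReal.coe_le_coe, coe_nnnorm, (hf t).deriv,
    Real.coe_toNNReal _ ((abs_nonneg _).trans (hf' t))]
  exact hf' t

theorem integral_mul_gaussianReal_eq_integral_deriv (hf : ∀ t, HasDerivAt f (f' t) t)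
    (hf' : ∀ t, |f' t| ≤ L) :
    ∫ t, f t * t ∂gaussianReal 0 1 = ∫ t, f' t ∂gaussianReal 0 1 := by
  have hid₂ : MemLp id 2 (gaussianReal 0 1) := memLp_id_gaussianReal 2
  have hf₂ : MemLp f 2 (gaussianReal 0 1) :=
    (lipschitzWith_of_abs_deriv_le hf hf').memLp_comp hid₂
  have hfφ : Integrable (fun t => f t * gaussianPDFReal 0 1 t) := by
    simpa [mul_comm] using (integrable_gaussianReal_iff one_ne_zero).1 (hf₂.integrable one_le_two)
  have hfφ' : Integrable (fun t => f t * (-t * gaussianPDFReal 0 1 t)) := by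
    simpa [mul_comm, mul_left_comm, mul_assoc] using
      ((integrable_gaussianReal_iff one_ne_zero).1 (hf₂.integrable_mul hid₂)).neg
  have hf'φ : Integrable (fun t => f' t * gaussianPDFReal 0 1 t) := by
    simpa [mul_comm] using (integrable_gaussianReal_iff one_ne_zero).1 (Integrable.of_bound
      (measurable_of_hasDerivAt hf).aestronglyMeasurable L (ae_of_all _ hf'))
  have hparts := integral_mul_deriv_eq_deriv_mul_of_integrable (fun t _ => hf t)
    (fun t _ => by simpa using hasDerivAt_gaussianPDFReal 0 1 t) hfφ' hf'φ hfφ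
  rw [integral_gaussianReal_eq_integral_smul one_ne_zero,
    integral_gaussianReal_eq_integral_smul one_ne_zero]
  simp only [smul_eq_mul, mul_neg, neg_mul, integral_neg, neg_inj] at hparts ⊢
  calc _ = ∫ t, f t * (t * gaussianPDFReal 0 1 t) := by congr 1; ext t; ring
    _ = _ := hparts.trans (by congr 1; ext t; ring)

theorem integral_comp_affine_mul_gaussianReal (hf : ∀ t, HasDerivAt f (f' t) t)
    (hf' : ∀ t, |f' t| ≤ L) (α r : ℝ) :
    ∫ t, f (α * t + r) * t ∂gaussianReal 0 1 = α * ∫ t, f' (α * t + r) ∂gaussianReal 0 1 := by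
  have hg (t : ℝ) : HasDerivAt (fun s => f (α * s + r)) (α * f' (α * t + r)) t := by
    have hlin : HasDerivAt (fun s => α * s + r) α t := by
      simpa using ((hasDerivAt_id t).const_mul α).add_const r
    exact ((hf (α * t + r)).comp t hlin).congr_deriv (mul_comm _ _)
  have hg' (t : ℝ) : |α * f' (α * t + r)| ≤ |α| * L := by
    rw [abs_mul]; exact mul_le_mul_of_nonneg_left (hf' _) (abs_nonneg α)
  rw [integral_mul_gaussianReal_eq_integral_deriv hg hg', integral_const_mul]

theorem integral_comp_dotProduct_mul_eval_gaussianPi {p : ℕ} (hf : ∀ t, HasDerivAt f (f' t) t)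
    (hf' : ∀ t, |f' t| ≤ L) (a : Fin p → ℝ) (m : Fin p) :
    ∫ v, f (a ⬝ᵥ v) * v m ∂(Measure.pi fun _ : Fin p => gaussianReal 0 1) =
      a m * ∫ v, f' (a ⬝ᵥ v) ∂(Measure.pi fun _ : Fin p => gaussianReal 0 1) := by
  obtain ⟨n, rfl⟩ : ∃ n, p = n + 1 := ⟨p - 1, by have := m.pos; omega⟩
  have he := measurePreserving_piFinSuccAbove (fun _ : Fin (n + 1) => gaussianReal 0 1) m
  set e := MeasurableEquiv.piFinSuccAbove (fun _ : Fin (n + 1) => ℝ) m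
  set b : Fin n → ℝ := fun i => a (m.succAbove i)
  have hsplit (v : Fin (n + 1) → ℝ) : a ⬝ᵥ v = a m * (e v).1 + b ⬝ᵥ (e v).2 :=
    Fin.sum_univ_succAbove _ m
  set F : ℝ × (Fin n → ℝ) → ℝ := fun q => f (a m * q.1 + b ⬝ᵥ q.2) * q.1
  set F' : ℝ × (Fin n → ℝ) → ℝ := fun q => f' (a m * q.1 + b ⬝ᵥ q.2)
  have hF : (fun v => f (a ⬝ᵥ v) * v m) = F ∘ e :=
    funext fun v => by simp only [F, Function.comp_apply, hsplit]; rfl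
  have hF' : (fun v => f' (a ⬝ᵥ v)) = F' ∘ e :=
    funext fun v => by simp only [F', Function.comp_apply, hsplit]
  have hFint : Integrable F ((gaussianReal 0 1).prod (Measure.pi fun _ => gaussianReal 0 1)) := by
    rw [← he.integrable_comp_emb e.measurableEmbedding, ← hF]
    exact (integrable_comp_dotProduct_smul_gaussianPi
      (lipschitzWith_of_abs_deriv_le hf hf') a).eval m
  have hF'int : Integrable F' ((gaussianReal 0 1).prod (Measure.pi fun _ => gaussianReal 0 1)) :=
    Integrable.of_bound ((measurable_of_hasDerivAt hf).comp (by fun_prop)).aestronglyMeasurable L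
      (ae_of_all _ fun _ => hf' _)
  calc _ = ∫ q, F q ∂(gaussianReal 0 1).prod (Measure.pi fun _ => gaussianReal 0 1) := by
        rw [hF]; exact he.integral_comp' F
    _ = ∫ w, ∫ t, F (t, w) ∂gaussianReal 0 1 ∂Measure.pi fun _ => gaussianReal 0 1 :=
        integral_prod_symm _ hFint
    _ = ∫ w, a m * ∫ t, F' (t, w) ∂gaussianReal 0 1 ∂Measure.pi fun _ => gaussianReal 0 1 := by
        congr 1; ext w; exact integral_comp_affine_mul_gaussianReal hf hf' (a m) (b ⬝ᵥ w)
    _ = _ := by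
        rw [integral_const_mul, ← integral_prod_symm _ hF'int, hF', ← he.integral_comp' F']; rfl

theorem integral_comp_dotProduct_smul_gaussianPi {p : ℕ} (hf : ∀ t, HasDerivAt f (f' t) t)
    (hf' : ∀ t, |f' t| ≤ L) (a : Fin p → ℝ) :
    ∫ v, f (a ⬝ᵥ v) • v ∂(Measure.pi fun _ : Fin p => gaussianReal 0 1) =
      (∫ v, f' (a ⬝ᵥ v) ∂(Measure.pi fun _ : Fin p => gaussianReal 0 1)) • a := by
  ext m
  rw [eval_integral (integrable_comp_dotProduct_smul_gaussianPi
    (lipschitzWith_of_abs_deriv_le hf hf') a).eval m]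
  simp only [Pi.smul_apply, smul_eq_mul]
  rw [integral_comp_dotProduct_mul_eval_gaussianPi hf hf', mul_comm]

theorem integral_comp_dotProduct_smul_of_map_eq_map_mulVec {Ω ι : Type*} [Fintype ι]
    [MeasurableSpace Ω] {P : Measure Ω} {q : ℕ} {x : Ω → ι → ℝ} (hx : AEMeasurable x P)
    (A : Matrix ι (Fin q) ℝ)
    (hlaw : P.map x = (Measure.pi fun _ : Fin q => gaussianReal 0 1).map (A *ᵥ ·))
    (hf : ∀ t, HasDerivAt f (f' t) t) (hf' : ∀ t, |f' t| ≤ L) (β : ι → ℝ) :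
    ∫ ω, f (β ⬝ᵥ x ω) • x ω ∂P = (∫ ω, f' (β ⬝ᵥ x ω) ∂P) • (A * Aᵀ) *ᵥ β := by
  have hcont : Continuous f := continuous_iff_continuousAt.2 fun t => (hf t).continuousAt
  have hlaw' : IdentDistrib x (A *ᵥ ·) P (Measure.pi fun _ => gaussianReal 0 1) :=
    ⟨hx, by fun_prop, hlaw⟩
  have hlhs := (hlaw'.comp (u := fun u => f (β ⬝ᵥ u) • u) (by fun_prop)).integral_eq
  have hrhs := (hlaw'.comp (u := fun u => f' (β ⬝ᵥ u))
    ((measurable_of_hasDerivAt hf).comp (by fun_prop))).integral_eq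
  simp only [Function.comp_def, dotProduct_mulVec, ← mulVec_smul] at hlhs hrhs
  rw [hlhs, hrhs, ← mulVec_mulVec, mulVec_transpose, ← mulVec_smul,
    ← integral_comp_dotProduct_smul_gaussianPi hf hf']
  exact (Matrix.toLin' A).toContinuousLinearMap.integral_comp_comm
    (integrable_comp_dotProduct_smul_gaussianPi (lipschitzWith_of_abs_deriv_le hf hf') _)

end Stein

section Model

variable {Ω ι : Type*} [MeasurableSpace Ω] {P : Measure Ω} [DecidableEq ι] {z : ι → Ω → ℝ}

lemma integral_mul_eq_ite_of_iIndepFun (hind : iIndepFun z P) (hz : ∀ i, Measurable (z i))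
    (hmean : ∀ i, ∫ ω, z i ω ∂P = 0) (hvar : ∀ i, ∫ ω, z i ω ^ 2 ∂P = 1) (i j : ι) :
    ∫ ω, z i ω * z j ω ∂P = if i = j then 1 else 0 := by
  split_ifs with hij
  · subst hij; simpa only [sq] using hvar i
  · rw [(hind.indepFun hij).integral_fun_mul_eq_mul_integral (hz i).aestronglyMeasurable
      (hz j).aestronglyMeasurable, hmean i, zero_mul]

theorem integral_mul_response_smul_eq [Fintype ι] {E : Type*} [NormedAddCommGroup E]
    [NormedSpace ℝ E] [MeasurableSpace E] [BorelSpace E] [SecondCountableTopology E]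
    {x : Ω → E} {ε y : Ω → ℝ} {g : ι → E → ℝ}
    (hx : Measurable x) (hz : ∀ i, Measurable (z i)) (hε : Measurable ε)
    (hg : ∀ i, Measurable (g i)) (hind : iIndepFun z P)
    (hmean : ∀ i, ∫ ω, z i ω ∂P = 0) (hvar : ∀ i, ∫ ω, z i ω ^ 2 ∂P = 1)
    (hzx : IndepFun (fun ω i => z i ω) x P)
    (hεzx : IndepFun ε (fun ω => ((fun i => z i ω), x ω)) P) (hεmean : ∫ ω, ε ω ∂P = 0)
    (hy : ∀ ω, y ω = ∑ i, z i ω * g i (x ω) + ε ω) (j : ι)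
    (hint : ∀ i, Integrable (fun ω => (z j ω * z i ω) • (g i (x ω) • x ω)) P)
    (hintε : Integrable (fun ω => (z j ω * ε ω) • x ω) P) :
    ∫ ω, (z j ω * y ω) • x ω ∂P = ∫ ω, g j (x ω) • x ω ∂P := by
  have hexpand (ω : Ω) : (z j ω * y ω) • x ω =
      ∑ i, (z j ω * z i ω) • (g i (x ω) • x ω) + (z j ω * ε ω) • x ω := by
    simp only [hy, mul_add, Finset.mul_sum, add_smul, Finset.sum_smul, smul_smul, mul_assoc]
  have hcross (i : ι) : ∫ ω, (z j ω * z i ω) • (g i (x ω) • x ω) ∂P =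
      (if j = i then 1 else 0 : ℝ) • ∫ ω, g i (x ω) • x ω ∂P := by
    rw [← integral_mul_eq_ite_of_iIndepFun hind hz hmean hvar]
    exact hzx.integral_fun_comp_smul_comp (f := fun u => u j * u i) (g := fun v => g i v • v)
      (by fun_prop) hx.aemeasurable (by fun_prop) ((hg i).smul measurable_id).aestronglyMeasurable
  have hnoise : ∫ ω, (z j ω * ε ω) • x ω ∂P = 0 := by
    simp_rw [mul_comm (z j _), mul_smul]
    refine (hεzx.integral_fun_comp_smul_comp (f := id) (g := fun q => q.1 j • q.2)
      hε.aemeasurable (by fun_prop) (by fun_prop) (by fun_prop)).trans ?_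
    simp [hεmean]
  simp_rw [hexpand]
  rw [integral_add (integrable_finsetSum _ fun i _ => hint i) hintε,
    integral_finsetSum _ fun i _ => hint i, hnoise, add_zero]
  simp [hcross]

end Model

theorem scaled_least_squares_structure_general
    {p k : ℕ} {Ω : Type*} [MeasurableSpace Ω] (P : Measure Ω)
    (x : Ω → (Fin p → ℝ)) (z : Fin k → Ω → ℝ) (ε y : Ω → ℝ)
    (S A : Matrix (Fin p) (Fin p) ℝ) (hS : S.PosDef) (hA : A * Aᵀ = S)
    (hlaw : Measure.map x P =
      Measure.map (fun v => A.mulVec v) (Measure.pi fun _ : Fin p => gaussianReal 0 1))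
    (f : Fin k → ℝ → ℝ) (hf : ∀ i, Differentiable ℝ (f i))
    (L : ℝ) (hbd : ∀ i t, |deriv (f i) t| ≤ L)
    (βs : Fin k → Fin p → ℝ)
    (hx : Measurable x) (hz : ∀ i, Measurable (z i)) (hε : Measurable ε)
    (hiid : iIndepFun z P)
    (hzmean : ∀ i, ∫ ω, z i ω ∂P = 0)
    (hzvar : ∀ i, ∫ ω, (z i ω) ^ 2 ∂P = 1)
    (hzx : IndepFun (fun ω => fun i => z i ω) x P)
    (hεind : IndepFun ε (fun ω => ((fun i => z i ω), x ω)) P)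
    (hεmean : ∫ ω, ε ω ∂P = 0)
    (hy : ∀ ω, y ω = ∑ i, z i ω * f i (βs i ⬝ᵥ x ω) + ε ω)
    (j : Fin k)
    (hint3 : ∀ i i' : Fin k,
      Integrable (fun ω => (z i ω * z i' ω) • (f i' (βs i' ⬝ᵥ x ω) • x ω)) P)
    (hint4 : Integrable (fun ω => (z j ω * ε ω) • x ω) P)
    (hne : ∫ ω, deriv (f j) (βs j ⬝ᵥ x ω) ∂P ≠ 0) :
    βs j = (∫ ω, deriv (f j) (βs j ⬝ᵥ x ω) ∂P)⁻¹ •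
      S⁻¹.mulVec (∫ ω, (z j ω * y ω) • x ω ∂P) := by
  have hmoment := integral_mul_response_smul_eq (g := fun i v => f i (βs i ⬝ᵥ v)) hx hz hε
    (fun i => (hf i).continuous.measurable.comp (by fun_prop)) hiid hzmean hzvar hzx hεind
    hεmean hy j (hint3 j) hint4
  have hstein := integral_comp_dotProduct_smul_of_map_eq_map_mulVec hx.aemeasurable A hlaw
    (fun t => (hf j t).hasDerivAt) (hbd j) (βs j)
  rw [hmoment, hstein, hA, mulVec_smul, mulVec_mulVec,
    nonsing_inv_mul S ((isUnit_iff_isUnit_det S).1 hS.isUnit), one_mulVec, smul_smul,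
    inv_mul_cancel₀ hne, one_smul]

/-- Theorem 1 of the paper: in the model with Gaussian x, each
`β_j* = c_j • S⁻¹ E[z_j y x]` where `c_j = 1 / E[f_j'(⟨x, β_j*⟩)]`. -/
theorem scaled_least_squares_structure
    {p k : ℕ} {Ω : Type*} [MeasurableSpace Ω] (P : Measure Ω) [IsProbabilityMeasure P]
    (x : Ω → (Fin p → ℝ)) (z : Fin k → Ω → ℝ) (ε y : Ω → ℝ)
    (S A : Matrix (Fin p) (Fin p) ℝ) (hS : S.PosDef) (hA : A * Aᵀ = S)
    (hlaw : Measure.map x P =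
      Measure.map (fun v => A.mulVec v) (Measure.pi fun _ : Fin p => gaussianReal 0 1))
    (f : Fin k → ℝ → ℝ) (hf : ∀ i, Differentiable ℝ (f i))
    (L : ℝ) (hbd : ∀ i t, |deriv (f i) t| ≤ L)
    (G : ℝ) (hlip : ∀ i s t, |deriv (f i) s - deriv (f i) t| ≤ G * |s - t|)
    (βs : Fin k → Fin p → ℝ)
    (hx : Measurable x) (hz : ∀ i, Measurable (z i)) (hε : Measurable ε)
    (hiid : iIndepFun z P)
    (hident : ∀ i j, Measure.map (z i) P = Measure.map (z j) P)
    (hzmean : ∀ i, ∫ ω, z i ω ∂P = 0)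
    (hzvar : ∀ i, ∫ ω, (z i ω) ^ 2 ∂P = 1)
    (hzx : IndepFun (fun ω => fun i => z i ω) x P)
    (hεind : IndepFun ε (fun ω => ((fun i => z i ω), x ω)) P)
    (hεmean : ∫ ω, ε ω ∂P = 0)
    (hy : ∀ ω, y ω = ∑ i, z i ω * f i (βs i ⬝ᵥ x ω) + ε ω)
    (j : Fin k)
    (hint1 : Integrable (fun ω => (z j ω * y ω) • x ω) P)
    (hint3 : ∀ i i' : Fin k,
      Integrable (fun ω => (z i ω * z i' ω) • (f i' (βs i' ⬝ᵥ x ω) • x ω)) P)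
    (hint4 : Integrable (fun ω => (z j ω * ε ω) • x ω) P)
    (hne : ∫ ω, deriv (f j) (βs j ⬝ᵥ x ω) ∂P ≠ 0) :
    βs j = (∫ ω, deriv (f j) (βs j ⬝ᵥ x ω) ∂P)⁻¹ •
      S⁻¹.mulVec (∫ ω, (z j ω * y ω) • x ω ∂P) :=
  scaled_least_squares_structure_general P x z ε y S A hS hA hlaw f hf L hbd βs hx hz hε hiid hzmean
    hzvar hzx hεind hεmean hy j hint3 hint4 hne
end

section
/- Let W ~ N(0,1), f(z) = 1/(1+e^{-z}), and define ℓ(z) = z · E[f'(Wz/20)] for z ≥ 0. Then ℓ(6) > 1.22. -/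
/-!
Writing `σ` for the sigmoid, `σ' = σ·(1 - σ) = 1 / (4 cosh² (u/2))`, and
`cosh x ≤ exp (x²/2)` gives the Gaussian-shaped lower bound `σ' u ≥ exp (-u²/4) / 4`.
Its expectation against `N(0,1)` is an explicit Gaussian integral, so
`6 · E[σ'(3W/10)] ≥ 3 / (2 √1.045) ≈ 1.467`.
-/

open MeasureTheory ProbabilityTheory Real

lemma deriv_sigmoid_eq_inv_cosh_sq (x : ℝ) : deriv sigmoid x = (cosh (x / 2) ^ 2)⁻¹ / 4 := by
  have hprod : (1 + exp (-x)) * (1 + exp x) = (2 * cosh (x / 2)) ^ 2 := by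
    have hhalf : exp (x / 2) ^ 2 = exp x := by rw [← exp_nat_mul]; ring_nf
    have hhalf_neg : exp (-(x / 2)) ^ 2 = exp (-x) := by rw [← exp_nat_mul]; ring_nf
    have hinv_half : exp (x / 2) * exp (-(x / 2)) = 1 := by rw [← exp_add]; simp
    have hinv : exp (-x) * exp x = 1 := by rw [← exp_add]; simp
    rw [cosh_eq, mul_div_cancel₀ _ two_ne_zero]
    linear_combination hinv - 2 * hinv_half - hhalf - hhalf_neg
  rw [(hasDerivAt_sigmoid x).deriv, ← sigmoid_neg, sigmoid_def, sigmoid_def, neg_neg,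
    ← mul_inv, hprod]
  ring

lemma exp_neg_sq_le_inv_cosh_sq (x : ℝ) : exp (-x ^ 2) ≤ (cosh x ^ 2)⁻¹ := by
  have hcosh : cosh x ^ 2 ≤ exp (x ^ 2) := by
    calc cosh x ^ 2 ≤ exp (x ^ 2 / 2) ^ 2 := by gcongr; exact cosh_le_exp_half_sq x
      _ = exp (x ^ 2) := by rw [← exp_nat_mul]; ring_nf
  rw [exp_neg]
  exact inv_anti₀ (by positivity) hcosh

lemma integral_exp_neg_mul_sq_gaussianReal {b : ℝ} (hb : 0 < 1 + 2 * b) :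
    ∫ w, exp (-b * w ^ 2) ∂(gaussianReal 0 1) = (√(1 + 2 * b))⁻¹ := by
  rw [integral_gaussianReal_eq_integral_smul one_ne_zero]
  have hintegrand : ∀ x : ℝ, gaussianPDFReal 0 1 x • exp (-b * x ^ 2)
      = (√(2 * π))⁻¹ * exp (-(1 / 2 + b) * x ^ 2) := by
    intro x
    simp only [gaussianPDFReal, NNReal.coe_one, mul_one, sub_zero, smul_eq_mul]
    rw [mul_assoc, ← exp_add]
    congr 2
    ring
  have hquot : π / (1 / 2 + b) = 2 * π / (1 + 2 * b) := by field_simp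
  simp_rw [hintegrand]
  rw [integral_const_mul, integral_gaussian, hquot, sqrt_div' _ hb.le]
  have hsqrt_pos : 0 < √(2 * π) := by positivity
  field_simp

lemma integrable_inv_cosh_sq_comp {α : Type*} [MeasurableSpace α] (μ : Measure α)
    [IsFiniteMeasure μ] {g : α → ℝ} (hg : Measurable g) :
    Integrable (fun a ↦ (cosh (g a) ^ 2)⁻¹) μ := by
  refine .of_bound (by fun_prop) 1 (ae_of_all _ fun a ↦ ?_)
  rw [norm_inv, norm_pow, Real.norm_of_nonneg (cosh_pos _).le]
  exact inv_le_one_of_one_le₀ (one_le_pow₀ (one_le_cosh _))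

lemma inv_four_mul_sqrt_le_integral_deriv_sigmoid (c : ℝ) :
    (4 * √(1 + c ^ 2 / 2))⁻¹ ≤ ∫ w, deriv sigmoid (c * w) ∂(gaussianReal 0 1) := by
  simp_rw [deriv_sigmoid_eq_inv_cosh_sq]
  have hb : 0 < 1 + 2 * (c ^ 2 / 4) := by positivity
  calc (4 * √(1 + c ^ 2 / 2))⁻¹
      = (∫ w, exp (-(c ^ 2 / 4) * w ^ 2) ∂(gaussianReal 0 1)) / 4 := by
        rw [integral_exp_neg_mul_sq_gaussianReal hb,
          show 1 + 2 * (c ^ 2 / 4) = 1 + c ^ 2 / 2 by ring]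
        ring
    _ = ∫ w, exp (-(c ^ 2 / 4) * w ^ 2) / 4 ∂(gaussianReal 0 1) := (integral_div _ _).symm
    _ ≤ ∫ w, (cosh (c * w / 2) ^ 2)⁻¹ / 4 ∂(gaussianReal 0 1) := by
        refine integral_mono_of_nonneg (ae_of_all _ fun w ↦ by positivity)
          ((integrable_inv_cosh_sq_comp _ (by fun_prop)).div_const 4) (ae_of_all _ fun w ↦ ?_)
        dsimp only
        rw [show -(c ^ 2 / 4) * w ^ 2 = -(c * w / 2) ^ 2 by ring]
        gcongr
        exact exp_neg_sq_le_inv_cosh_sq _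

/-- For the sigmoid `f` and `W ~ N(0,1)`, `ℓ(z) = z·E[f'(Wz/20)]` satisfies
`ℓ(6) > 1.22`. -/
theorem ell_six_gt (f : ℝ → ℝ)
    (hf : ∀ z, f z = (1 + Real.exp (-z))⁻¹) :
    (1.22 : ℝ) <
      6 * ∫ w, deriv f (w * 6 / 20) ∂(gaussianReal 0 1) := by
  obtain rfl : f = sigmoid := funext hf
  have hlower := inv_four_mul_sqrt_le_integral_deriv_sigmoid (3 / 10)
  simp_rw [show ∀ w : ℝ, w * 6 / 20 = 3 / 10 * w from fun w ↦ by ring]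
  have hsqrt : √(1 + (3 / 10) ^ 2 / 2 : ℝ) < 3 / 2 / 1.22 := by
    rw [sqrt_lt' (by norm_num)]
    norm_num
  have hnum : (1.22 : ℝ) < 6 * (4 * √(1 + (3 / 10) ^ 2 / 2))⁻¹ := by
    rw [lt_div_iff₀ (by norm_num)] at hsqrt
    rw [mul_inv, ← mul_assoc, ← div_eq_mul_inv, lt_div_iff₀ (by positivity)]
    linarith
  linarith
end

section
/- Let W ~ N(0,1), f(z) = 1/(1+e^{-z}), and ℓ(z) = z E[f'(Wz/20)]. Then for z ∈ [0, 6], the derivative satisfies ℓ'(z) = E[f'(Wz/20)] + (z/20)² E[f'''(Wz/20)] ≥ 0.19. -/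
/-!
Differentiating `c ↦ E[f'(Wc/20)]` under the integral sign gives `E[W f''(Wz/20)] / 20`, and
Stein's identity `E[W g(W)] = E[g'(W)]` (integration by parts against the Gaussian density) turns
this into `(z/20) E[f'''(Wz/20)] / 20`, whence the formula for `ℓ'`. For the bound, write
`f' = 1/4 - (f - 1/2)²`; as `f` is `1/4`-Lipschitz, `f'(x) ≥ 1/4 - x²/16`, so
`E[f'(Wz/20)] ≥ 1/4 - (z/20)²/16` since `E[W²] = 1`. With `|f'''| ≤ 1/8` and
`(z/20)² ≤ 0.09` this gives `ℓ'(z) ≥ 1/4 - 3 · 0.09 / 16 > 0.19`.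
-/

open MeasureTheory ProbabilityTheory

namespace Real

noncomputable def sigmoidDeriv (x : ℝ) : ℝ := sigmoid x * (1 - sigmoid x)

noncomputable def sigmoidDeriv2 (x : ℝ) : ℝ := sigmoidDeriv x * (1 - 2 * sigmoid x)

noncomputable def sigmoidDeriv3 (x : ℝ) : ℝ := sigmoidDeriv x * (1 - 6 * sigmoidDeriv x)

lemma hasDerivAt_sigmoidDeriv (x : ℝ) : HasDerivAt sigmoidDeriv (sigmoidDeriv2 x) x :=
  ((hasDerivAt_sigmoid x).mul ((hasDerivAt_sigmoid x).const_sub 1)).congr_deriv <| by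
    unfold sigmoidDeriv2 sigmoidDeriv; ring

lemma hasDerivAt_sigmoidDeriv2 (x : ℝ) : HasDerivAt sigmoidDeriv2 (sigmoidDeriv3 x) x :=
  ((hasDerivAt_sigmoidDeriv x).mul
    (((hasDerivAt_sigmoid x).const_mul 2).const_sub 1)).congr_deriv <| by
    unfold sigmoidDeriv3 sigmoidDeriv2 sigmoidDeriv; ring

lemma deriv_sigmoid_eq_sigmoidDeriv : deriv sigmoid = sigmoidDeriv := deriv_sigmoid

lemma deriv_sigmoidDeriv : deriv sigmoidDeriv = sigmoidDeriv2 :=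
  funext fun x => (hasDerivAt_sigmoidDeriv x).deriv

lemma deriv_sigmoidDeriv2 : deriv sigmoidDeriv2 = sigmoidDeriv3 :=
  funext fun x => (hasDerivAt_sigmoidDeriv2 x).deriv

@[fun_prop]
lemma continuous_sigmoidDeriv : Continuous sigmoidDeriv :=
  continuous_iff_continuousAt.2 fun x => (hasDerivAt_sigmoidDeriv x).continuousAt

@[fun_prop]
lemma continuous_sigmoidDeriv2 : Continuous sigmoidDeriv2 :=
  continuous_iff_continuousAt.2 fun x => (hasDerivAt_sigmoidDeriv2 x).continuousAt

@[fun_prop]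
lemma continuous_sigmoidDeriv3 : Continuous sigmoidDeriv3 :=
  continuous_sigmoidDeriv.mul (continuous_const.sub (continuous_const.mul continuous_sigmoidDeriv))

lemma sigmoidDeriv_eq_quarter_sub_sq (x : ℝ) :
    sigmoidDeriv x = 1 / 4 - (sigmoid x - 1 / 2) ^ 2 := by
  unfold sigmoidDeriv; ring

lemma sigmoidDeriv_nonneg (x : ℝ) : 0 ≤ sigmoidDeriv x :=
  mul_nonneg (sigmoid_nonneg x) (sub_nonneg.2 (sigmoid_le_one x))

lemma sigmoidDeriv_le_quarter (x : ℝ) : sigmoidDeriv x ≤ 1 / 4 := by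
  rw [sigmoidDeriv_eq_quarter_sub_sq]; nlinarith

lemma abs_sigmoidDeriv_le (x : ℝ) : |sigmoidDeriv x| ≤ 1 / 4 := by
  rw [abs_of_nonneg (sigmoidDeriv_nonneg x)]; exact sigmoidDeriv_le_quarter x

lemma abs_sigmoidDeriv2_le (x : ℝ) : |sigmoidDeriv2 x| ≤ 1 / 4 := by
  have h : |1 - 2 * sigmoid x| ≤ 1 :=
    abs_le.2 ⟨by linarith [sigmoid_le_one x], by linarith [sigmoid_nonneg x]⟩
  rw [sigmoidDeriv2, abs_mul]
  nlinarith [abs_sigmoidDeriv_le x, abs_nonneg (sigmoidDeriv x)]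

lemma abs_sigmoidDeriv3_le (x : ℝ) : |sigmoidDeriv3 x| ≤ 1 / 8 := by
  have h0 := sigmoidDeriv_nonneg x
  have h1 := sigmoidDeriv_le_quarter x
  rw [sigmoidDeriv3, abs_le]
  constructor <;> nlinarith

lemma abs_sigmoid_sub_half_le (x : ℝ) : |sigmoid x - 1 / 2| ≤ |x| / 4 := by
  have h := (convex_univ (𝕜 := ℝ)).norm_image_sub_le_of_norm_deriv_le
    (fun _ _ => differentiableAt_sigmoid)
    (fun y _ => by rw [deriv_sigmoid_eq_sigmoidDeriv]; exact abs_sigmoidDeriv_le y)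
    (Set.mem_univ 0) (Set.mem_univ x)
  rw [sigmoid_zero, sub_zero] at h
  simpa [Real.norm_eq_abs, div_eq_inv_mul, mul_comm] using h

lemma quarter_sub_sq_le_sigmoidDeriv (x : ℝ) : 1 / 4 - x ^ 2 / 16 ≤ sigmoidDeriv x := by
  have h : (sigmoid x - 1 / 2) ^ 2 ≤ (x / 4) ^ 2 :=
    sq_le_sq.2 (by simpa [abs_div] using abs_sigmoid_sub_half_le x)
  rw [sigmoidDeriv_eq_quarter_sub_sq]
  linarith

end Real

open scoped NNReal

theorem hasDerivAt_integral_comp_mul {ν : Measure ℝ} (hν : Integrable (fun w => w) ν)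
    {h h' : ℝ → ℝ} (hh : ∀ x, HasDerivAt h (h' x) x) {C : ℝ} (hC : ∀ x, |h' x| ≤ C)
    {c : ℝ} (hc : Integrable (fun w => h (w * c)) ν) :
    HasDerivAt (fun c => ∫ w, h (w * c) ∂ν) (∫ w, w * h' (w * c) ∂ν) c := by
  have hh_cont : Continuous h := continuous_iff_continuousAt.2 fun x => (hh x).continuousAt
  have hh'_meas : Measurable h' := by
    rw [show h' = deriv h from funext fun x => (hh x).deriv.symm]
    exact measurable_deriv h
  refine (hasDerivAt_integral_of_dominated_loc_of_deriv_le (F' := fun c w => w * h' (w * c))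
    (bound := fun w => C * |w|) Filter.univ_mem
    (.of_forall fun c => (by fun_prop : Continuous fun w => h (w * c)).aestronglyMeasurable)
    hc (by fun_prop : Measurable fun w => w * h' (w * c)).aestronglyMeasurable
    (.of_forall fun w c _ => ?_) (hν.norm.const_mul C) (.of_forall fun w c _ => ?_)).2
  · rw [Real.norm_eq_abs, abs_mul, mul_comm]
    exact mul_le_mul_of_nonneg_right (hC _) (abs_nonneg w)
  · exact ((hh (w * c)).comp c ((hasDerivAt_id c).const_mul w)).congr_deriv (by simp [mul_comm])

namespace ProbabilityTheory

variable {μ : ℝ} {v : ℝ≥0}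

lemma hasDerivAt_gaussianPDFReal (x : ℝ) :
    HasDerivAt (gaussianPDFReal μ v) (-((x - μ) / v) * gaussianPDFReal μ v x) x := by
  rw [gaussianPDFReal_def]
  have h := ((((hasDerivAt_id' x).sub_const μ).pow 2).neg.div_const (2 * (v : ℝ))).exp
  exact (h.const_mul _).congr_deriv (by simp only [Pi.pow_apply, Pi.neg_apply]; ring)

lemma integrable_gaussianReal_iff (hv : v ≠ 0) {f : ℝ → ℝ} :
    Integrable f (gaussianReal μ v) ↔ Integrable (fun x => gaussianPDFReal μ v x * f x) := by
  rw [gaussianReal_of_var_ne_zero _ hv, integrable_withDensity_iff_integrable_smul'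
    (measurable_gaussianPDF _ _) (ae_of_all _ fun _ => gaussianPDF_lt_top)]
  simp

theorem integral_sub_mul_gaussianReal {g g' : ℝ → ℝ} (hg : ∀ x, HasDerivAt g (g' x) x)
    (hg_int : Integrable g (gaussianReal μ v)) (hg'_int : Integrable g' (gaussianReal μ v))
    (hxg_int : Integrable (fun x => (x - μ) * g x) (gaussianReal μ v)) :
    ∫ x, (x - μ) * g x ∂gaussianReal μ v = v * ∫ x, g' x ∂gaussianReal μ v := by
  rcases eq_or_ne v 0 with rfl | hv
  · simp [gaussianReal_zero_var]
  set p := gaussianPDFReal μ v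
  rw [integrable_gaussianReal_iff hv] at hg_int hg'_int hxg_int
  have hF : ∀ x, HasDerivAt (fun y => p y * g y) (p x * g' x - p x * ((x - μ) * g x) / v) x :=
    fun x => ((hasDerivAt_gaussianPDFReal x).mul (hg x)).congr_deriv (by ring)
  have h0 := integral_eq_zero_of_hasDerivAt_of_integrable hF
    (hg'_int.sub (hxg_int.div_const _)) hg_int
  rw [integral_sub hg'_int (hxg_int.div_const _), integral_div, sub_eq_zero] at h0
  simp only [integral_gaussianReal_eq_integral_smul hv, smul_eq_mul]
  rw [h0]
  field_simp

lemma integrable_id_gaussianReal : Integrable (fun x => x) (gaussianReal μ v) :=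
  (memLp_id_gaussianReal' 1 ENNReal.one_ne_top).integrable le_rfl

lemma integrable_sq_gaussianReal : Integrable (fun x => x ^ 2) (gaussianReal μ v) :=
  (memLp_id_gaussianReal 2).integrable_sq

lemma integral_sq_gaussianReal : ∫ x, x ^ 2 ∂gaussianReal μ v = μ ^ 2 + v := by
  have h := variance_eq_sub (memLp_id_gaussianReal (μ := μ) (v := v) 2)
  rw [variance_id_gaussianReal] at h
  simp only [Pi.pow_apply, id_eq, integral_id_gaussianReal] at h
  linarith

end ProbabilityTheory

open Real

lemma abs_integral_sigmoidDeriv3_le {ν : Measure ℝ} [IsProbabilityMeasure ν]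
    (φ : ℝ → ℝ) :
    |∫ w, sigmoidDeriv3 (φ w) ∂ν| ≤ 1 / 8 := by
  simpa using norm_integral_le_of_norm_le_const (μ := ν) (f := fun w => sigmoidDeriv3 (φ w))
    (.of_forall fun w => abs_sigmoidDeriv3_le (φ w))

lemma integral_mul_sigmoidDeriv2_gaussianReal (a c : ℝ) :
    ∫ w, w * sigmoidDeriv2 (w * c / a) ∂gaussianReal 0 1
      = c / a * ∫ w, sigmoidDeriv3 (w * c / a) ∂gaussianReal 0 1 := by
  have h := integral_sub_mul_gaussianReal (μ := 0) (v := 1)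
    (g := fun w => sigmoidDeriv2 (w * c / a)) (g' := fun w => c / a * sigmoidDeriv3 (w * c / a))
    (fun w => (HasDerivAt.comp (h₂ := sigmoidDeriv2) w (hasDerivAt_sigmoidDeriv2 _)
      (((hasDerivAt_id' w).mul_const c).div_const a)).congr_deriv (by ring))
    (.of_bound (by fun_prop) (1 / 4) (.of_forall fun w => abs_sigmoidDeriv2_le _))
    ((Integrable.of_bound (by fun_prop) (1 / 8)
      (.of_forall fun w => abs_sigmoidDeriv3_le _)).const_mul _)
    ((integrable_id_gaussianReal.sub (integrable_const 0)).mul_bdd (by fun_prop) (c := 1 / 4)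
      (.of_forall fun w => abs_sigmoidDeriv2_le _))
  simpa [integral_const_mul] using h

lemma hasDerivAt_integral_sigmoidDeriv_gaussianReal (a c : ℝ) :
    HasDerivAt (fun c => ∫ w, sigmoidDeriv (w * c / a) ∂gaussianReal 0 1)
      (c / a ^ 2 * ∫ w, sigmoidDeriv3 (w * c / a) ∂gaussianReal 0 1) c := by
  have hd := hasDerivAt_integral_comp_mul (ν := gaussianReal 0 1) (c := c)
    (h := fun x => sigmoidDeriv (x / a)) (h' := fun x => sigmoidDeriv2 (x / a) / a)
    integrable_id_gaussianReal
    (fun x => (HasDerivAt.comp (h₂ := sigmoidDeriv) x (hasDerivAt_sigmoidDeriv _)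
      ((hasDerivAt_id' x).div_const a)).congr_deriv (by ring)) (C := 1 / 4 / |a|)
    (fun x => by rw [abs_div]; gcongr; exact abs_sigmoidDeriv2_le _)
    (.of_bound (by fun_prop) (1 / 4) (.of_forall fun w => abs_sigmoidDeriv_le _))
  convert hd using 1
  simp_rw [mul_div_assoc', integral_div, integral_mul_sigmoidDeriv2_gaussianReal]
  ring

lemma quarter_sub_le_integral_sigmoidDeriv_gaussianReal (a c : ℝ) :
    1 / 4 - (c / a) ^ 2 / 16 ≤ ∫ w, sigmoidDeriv (w * c / a) ∂gaussianReal 0 1 :=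
  calc 1 / 4 - (c / a) ^ 2 / 16
      = ∫ w, (1 / 4 - (c / a) ^ 2 / 16 * w ^ 2) ∂gaussianReal 0 1 := by
        rw [integral_sub (integrable_const _) (integrable_sq_gaussianReal.const_mul _),
          integral_const_mul, integral_sq_gaussianReal]
        simp
    _ ≤ ∫ w, sigmoidDeriv (w * c / a) ∂gaussianReal 0 1 :=
        integral_mono ((integrable_const _).sub (integrable_sq_gaussianReal.const_mul _))
          (.of_bound (by fun_prop) (1 / 4) (.of_forall fun w => abs_sigmoidDeriv_le _))
          fun w => (quarter_sub_sq_le_sigmoidDeriv _).trans_eq' (by ring)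

/-- For the sigmoid `f`, `W ~ N(0,1)` and `ℓ(z) = z·E[f'(Wz/20)]`, on `[0,6]`
the derivative is `ℓ'(z) = E[f'(Wz/20)] + (z/20)² E[f'''(Wz/20)] ≥ 0.19`. -/
theorem ell_deriv_bound (f : ℝ → ℝ)
    (hf : ∀ z, f z = (1 + Real.exp (-z))⁻¹)
    (z : ℝ) (hz : z ∈ Set.Icc (0 : ℝ) 6) :
    HasDerivAt (fun c => c * ∫ w, deriv f (w * c / 20) ∂(gaussianReal 0 1))
      ((∫ w, deriv f (w * z / 20) ∂(gaussianReal 0 1)) +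
        (z / 20) ^ 2 *
          ∫ w, deriv (deriv (deriv f)) (w * z / 20) ∂(gaussianReal 0 1)) z ∧
    (0.19 : ℝ) ≤
      (∫ w, deriv f (w * z / 20) ∂(gaussianReal 0 1)) +
        (z / 20) ^ 2 *
          ∫ w, deriv (deriv (deriv f)) (w * z / 20) ∂(gaussianReal 0 1) := by
  obtain rfl : f = sigmoid := funext hf
  rw [deriv_sigmoid_eq_sigmoidDeriv, deriv_sigmoidDeriv, deriv_sigmoidDeriv2]
  refine ⟨((hasDerivAt_id' z).mul
    (hasDerivAt_integral_sigmoidDeriv_gaussianReal 20 z)).congr_deriv (by ring), ?_⟩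
  have hI := quarter_sub_le_integral_sigmoidDeriv_gaussianReal 20 z
  have hJ := abs_le.1 (abs_integral_sigmoidDeriv3_le (ν := gaussianReal 0 1) fun w => w * z / 20)
  have hk : (z / 20) ^ 2 ≤ 9 / 100 := by nlinarith [hz.1, hz.2]
  nlinarith [sq_nonneg (z / 20)]
end
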